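/- arXiv:2305.11670 — 2 statements merged into one kernel-verified Lean document; each statement's English description precedes it below -/
import Mathlib

section
/- Let ω⁻, ω⁺, κ⁻, κ⁺, ρ⁻, ρ⁺ be nonzero complex numbers. Suppose u(x,t) = v(x)·exp(-iω⁻t) for t<0 and u(x,t) = v(x)·exp(-iω⁺t) for t≥0 (with v not identically zero) is a distributional solution of the wave equation ∂ₜ((1/κ(t))∂ₜu) − (1/ρ(t))Δu = 0, where κ(t)=κ⁻, ρ(t)=ρ⁻ for t<0 and κ(t)=κ⁺, ρ(t)=ρ⁺ for t≥0. Then ω⁺/ω⁻ = κ⁺/κ⁻ = ρ⁻/ρ⁺ (the temporal Snell's law). -/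
open Complex

/-!
At a point `x` with `v x ≠ 0`, continuity of `(1/κ)∂ₜu` says that `ω/κ` is the same on both
sides of `t = 0`, while both Helmholtz equations express `-Δv x / v x` as `ω²ρ/κ`, so `ω²ρ/κ` is
continuous too. Dividing the second quantity by the first, `ωρ` is continuous; the two
continuity relations are the two ratios of the temporal Snell law.
-/

section Field

variable {K : Type*} [Field K]

theorem div_eq_div_of_one_div_mul_mul_eq {a a' b b' c v : K} (hc : c ≠ 0) (hv : v ≠ 0)
    (h : 1 / a * (c * b) * v = 1 / a' * (c * b') * v) : b / a = b' / a' := by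
  have hcv : c * (b / a) = c * (b' / a') := by
    simpa only [one_div_mul_eq_div, mul_div_assoc] using mul_right_cancel₀ hv h
  exact mul_left_cancel₀ hc hcv

theorem sq_mul_div_eq_neg_div_of_helmholtz {ω κ ρ v Δv : K} (hρ : ρ ≠ 0) (hv : v ≠ 0)
    (h : ω ^ 2 * v / κ + Δv / ρ = 0) : ω ^ 2 * ρ / κ = -Δv / v := by
  rw [eq_div_iff hv]
  field_simp at h ⊢
  linear_combination h

theorem mul_eq_mul_of_div_eq_div_of_sq_mul_div_eq {ωm ωp κm κp ρm ρp : K}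
    (hωm : ωm ≠ 0) (hκm : κm ≠ 0) (hflux : ωm / κm = ωp / κp)
    (hdisp : ωm ^ 2 * ρm / κm = ωp ^ 2 * ρp / κp) : ωm * ρm = ωp * ρp := by
  have hratio : ωm / κm * (ωm * ρm) = ωm / κm * (ωp * ρp) := by
    calc ωm / κm * (ωm * ρm) = ωm ^ 2 * ρm / κm := by ring
      _ = ωp ^ 2 * ρp / κp := hdisp
      _ = ωp / κp * (ωp * ρp) := by ring
      _ = ωm / κm * (ωp * ρp) := by rw [hflux]
  exact mul_left_cancel₀ (div_ne_zero hωm hκm) hratio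

end Field

theorem temporal_snell_law_general
    (ωm ωp κm κp ρm ρp : ℂ)
    (hωm : ωm ≠ 0) (hκm : κm ≠ 0) (hκp : κp ≠ 0)
    (hρm : ρm ≠ 0) (hρp : ρp ≠ 0)
    (v Δv : EuclideanSpace ℝ (Fin 3) → ℂ)
    (hv : ∃ x, v x ≠ 0)
    -- Helmholtz equation for negative times, coming from the wave equation
    (hHelmM : ∀ x, ωm ^ 2 * v x / κm + Δv x / ρm = 0)
    -- Helmholtz equation for nonnegative times
    (hHelmP : ∀ x, ωp ^ 2 * v x / κp + Δv x / ρp = 0)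
    -- continuity of (1/κ)∂ₜu across the time boundary t = 0
    (hjump : ∀ x, (1 / κm) * (-Complex.I * ωm) * v x = (1 / κp) * (-Complex.I * ωp) * v x) :
    ωp / ωm = κp / κm ∧ ωp / ωm = ρm / ρp := by
  obtain ⟨x, hx⟩ := hv
  have hflux : ωm / κm = ωp / κp :=
    div_eq_div_of_one_div_mul_mul_eq (neg_ne_zero.mpr I_ne_zero) hx (hjump x)
  have hdisp : ωm ^ 2 * ρm / κm = ωp ^ 2 * ρp / κp := by
    rw [sq_mul_div_eq_neg_div_of_helmholtz hρm hx (hHelmM x),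
      sq_mul_div_eq_neg_div_of_helmholtz hρp hx (hHelmP x)]
  have hωρ := mul_eq_mul_of_div_eq_div_of_sq_mul_div_eq hωm hκm hflux hdisp
  rw [div_eq_div_iff hκm hκp] at hflux
  constructor
  · rw [div_eq_div_iff hωm hκm]
    linear_combination -hflux
  · rw [div_eq_div_iff hωm hρp]
    linear_combination -hωρ

/-- Temporal Snell's law: if `u(x,t) = v(x)e^{-iω⁻t}` (t<0), `v(x)e^{-iω⁺t}` (t≥0) is a
quasi-harmonic solution of the wave equation with piecewise constant parameters, i.e.
`v` (not identically zero, with Laplacian `Δv`) satisfies the Helmholtz equations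
obtained on each time interval and `(1/κ)∂ₜu` is continuous across `t = 0`, then
`ω⁺/ω⁻ = κ⁺/κ⁻ = ρ⁻/ρ⁺`. -/
theorem temporal_snell_law
    (ωm ωp κm κp ρm ρp : ℂ)
    (hωm : ωm ≠ 0) (hωp : ωp ≠ 0) (hκm : κm ≠ 0) (hκp : κp ≠ 0)
    (hρm : ρm ≠ 0) (hρp : ρp ≠ 0)
    (v Δv : EuclideanSpace ℝ (Fin 3) → ℂ)
    (hv : ∃ x, v x ≠ 0)
    -- Helmholtz equation for negative times, coming from the wave equation
    (hHelmM : ∀ x, ωm ^ 2 * v x / κm + Δv x / ρm = 0)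
    -- Helmholtz equation for nonnegative times
    (hHelmP : ∀ x, ωp ^ 2 * v x / κp + Δv x / ρp = 0)
    -- continuity of (1/κ)∂ₜu across the time boundary t = 0
    (hjump : ∀ x, (1 / κm) * (-Complex.I * ωm) * v x = (1 / κp) * (-Complex.I * ωp) * v x) :
    ωp / ωm = κp / κm ∧ ωp / ωm = ρm / ρp :=
  temporal_snell_law_general ωm ωp κm κp ρm ρp hωm hκm hκp hρm hρp v Δv hv hHelmM hHelmP hjump
end

section
/- Let ω₁, ω₂ ∈ ℂ, V₁ ∈ ℂ*, and let I(ω₁), I(ω₂) be 2×2 complex matrices with D := I₁₁(ω₂)det(I(ω₁)) − I₁₁(ω₁)det(I(ω₂)) ≠ 0. Define p and q as in Theorem 2.7 (p = V₁·(det I(ω₁) − det I(ω₂) + I₂₂(ω₁)I₁₁(ω₂) − I₂₂(ω₂)I₁₁(ω₁))/D, q = V₁²·(I₂₂(ω₁) − I₂₂(ω₂))/D), and set X₁ = −p/2 ± √(p²/4 − q). If additionally X₁det(I(ωⱼ)) + V₁I₂₂(ωⱼ) ≠ 0 for j = 1,2, then X₂ := −V₂(V₁ + I₁₁(ω₁)X₁)/(X₁det(I(ω₁))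 + V₁I₂₂(ω₁)) satisfies simultaneously, for j = 1 and j = 2: X₁X₂det(I(ωⱼ)) + X₁V₂I₁₁(ωⱼ) + X₂V₁I₂₂(ωⱼ) + V₁V₂ = 0. -/
/-!
The defect condition at a single frequency is affine in `X₂`:
`X₂ (X₁ det M + V₁ M₁₁) + V₂ (V₁ + M₀₀ X₁) = 0`. So `X₂` is forced by the first frequency, and
it also solves the second equation exactly when the two affine equations are compatible; after
cross-multiplication that compatibility condition is `D (X₁² + p X₁ + q) = 0`, the quadratic
whose roots are `-p/2 ± s`.
-/

open Matrix

variable {K : Type*} [Field K]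

/-- `det (diagonal ![V₁, V₂] + diagonal ![X₁, X₂] * M)`, expanded. -/
def defectPoly (M : Matrix (Fin 2) (Fin 2) K) (V₁ V₂ X₁ X₂ : K) : K :=
  X₁ * X₂ * M.det + X₁ * V₂ * M 0 0 + X₂ * V₁ * M 1 1 + V₁ * V₂

lemma defectPoly_eq_affine (M : Matrix (Fin 2) (Fin 2) K) (V₁ V₂ X₁ X₂ : K) :
    defectPoly M V₁ V₂ X₁ X₂ = X₂ * (X₁ * M.det + V₁ * M 1 1) + V₂ * (V₁ + M 0 0 * X₁) := by
  unfold defectPoly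
  ring

/-- Cross-multiplied condition for the affine equations of `M` and `N` to share their
solution `X₂`. -/
def defectCompat (M N : Matrix (Fin 2) (Fin 2) K) (V₁ X₁ : K) : K :=
  (V₁ + N 0 0 * X₁) * (X₁ * M.det + V₁ * M 1 1) - (V₁ + M 0 0 * X₁) * (X₁ * N.det + V₁ * N 1 1)

lemma defectCompat_self (M : Matrix (Fin 2) (Fin 2) K) (V₁ X₁ : K) :
    defectCompat M M V₁ X₁ = 0 :=
  sub_self _

lemma defectPoly_mul_denom (M N : Matrix (Fin 2) (Fin 2) K) (V₁ V₂ X₁ : K)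
    (hden : X₁ * M.det + V₁ * M 1 1 ≠ 0) :
    defectPoly N V₁ V₂ X₁ (-V₂ * (V₁ + M 0 0 * X₁) / (X₁ * M.det + V₁ * M 1 1))
      * (X₁ * M.det + V₁ * M 1 1) = V₂ * defectCompat M N V₁ X₁ := by
  rw [defectPoly_eq_affine, defectCompat]
  field_simp
  ring

lemma defectPoly_eq_zero_of_defectCompat_eq_zero {M N : Matrix (Fin 2) (Fin 2) K} {V₁ V₂ X₁ : K}
    (hden : X₁ * M.det + V₁ * M 1 1 ≠ 0) (hcompat : defectCompat M N V₁ X₁ = 0) :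
    defectPoly N V₁ V₂ X₁ (-V₂ * (V₁ + M 0 0 * X₁) / (X₁ * M.det + V₁ * M 1 1)) = 0 := by
  have h := defectPoly_mul_denom M N V₁ V₂ X₁ hden
  rw [hcompat, mul_zero] at h
  exact (mul_eq_zero.mp h).resolve_right hden

lemma defectCompat_eq_mul_quadratic {M N : Matrix (Fin 2) (Fin 2) K} {V₁ X₁ D p q : K}
    (hD : D = N 0 0 * M.det - M 0 0 * N.det) (hD0 : D ≠ 0)
    (hp : p = V₁ * (M.det - N.det + M 1 1 * N 0 0 - N 1 1 * M 0 0) / D)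
    (hq : q = V₁ ^ 2 * (M 1 1 - N 1 1) / D) :
    defectCompat M N V₁ X₁ = D * (X₁ ^ 2 + p * X₁ + q) := by
  rw [hp, hq, defectCompat]
  field_simp
  rw [hD]
  ring

lemma sq_add_mul_add_eq_zero_of_eq_neg_half_add [NeZero (2 : K)] {p q s x : K}
    (hs : s ^ 2 = p ^ 2 / 4 - q) (hx : x = -p / 2 + s ∨ x = -p / 2 - s) :
    x ^ 2 + p * x + q = 0 := by
  have h4 : (4 : K) = 2 ^ 2 := by norm_num
  have hs' : (2 * s) ^ 2 = p ^ 2 - 4 * q := by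
    rw [mul_pow, hs, h4]
    field_simp
  rcases hx with rfl | rfl <;>
  · field_simp
    linear_combination hs'

theorem double_defect_design_general
    (V₁ V₂ : ℂ)
    (M₁ M₂ : Matrix (Fin 2) (Fin 2) ℂ)
    (D : ℂ) (hD : D = M₂ 0 0 * M₁.det - M₁ 0 0 * M₂.det) (hD0 : D ≠ 0)
    (p q : ℂ)
    (hp : p = V₁ * (M₁.det - M₂.det + M₁ 1 1 * M₂ 0 0 - M₂ 1 1 * M₁ 0 0) / D)
    (hq : q = V₁ ^ 2 * (M₁ 1 1 - M₂ 1 1) / D)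
    (s X₁ : ℂ) (hs : s ^ 2 = p ^ 2 / 4 - q)
    (hX₁ : X₁ = -p / 2 + s ∨ X₁ = -p / 2 - s)
    (hden₁ : X₁ * M₁.det + V₁ * M₁ 1 1 ≠ 0)
    (X₂ : ℂ) (hX₂ : X₂ = -V₂ * (V₁ + M₁ 0 0 * X₁) / (X₁ * M₁.det + V₁ * M₁ 1 1)) :
    (X₁ * X₂ * M₁.det + X₁ * V₂ * M₁ 0 0 + X₂ * V₁ * M₁ 1 1 + V₁ * V₂ = 0) ∧
    (X₁ * X₂ * M₂.det + X₁ * V₂ * M₂ 0 0 + X₂ * V₁ * M₂ 1 1 + V₁ * V₂ = 0) := by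
  have hroot : X₁ ^ 2 + p * X₁ + q = 0 := sq_add_mul_add_eq_zero_of_eq_neg_half_add hs hX₁
  have hcompat : defectCompat M₁ M₂ V₁ X₁ = 0 := by
    rw [defectCompat_eq_mul_quadratic hD hD0 hp hq, hroot, mul_zero]
  subst hX₂
  exact ⟨defectPoly_eq_zero_of_defectCompat_eq_zero hden₁ (defectCompat_self M₁ V₁ X₁),
    defectPoly_eq_zero_of_defectCompat_eq_zero hden₁ hcompat⟩

/-- Double defect design (Theorem 2.7): with `X₁` a root of the explicit quadratic and
`X₂` defined by the explicit formula, both defect equations (at `ω₁` and `ω₂`) hold. -/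
theorem double_defect_design
    (V₁ V₂ : ℂ) (hV₁ : V₁ ≠ 0) (hV₂ : V₂ ≠ 0)
    (M₁ M₂ : Matrix (Fin 2) (Fin 2) ℂ)
    (D : ℂ) (hD : D = M₂ 0 0 * M₁.det - M₁ 0 0 * M₂.det) (hD0 : D ≠ 0)
    (p q : ℂ)
    (hp : p = V₁ * (M₁.det - M₂.det + M₁ 1 1 * M₂ 0 0 - M₂ 1 1 * M₁ 0 0) / D)
    (hq : q = V₁ ^ 2 * (M₁ 1 1 - M₂ 1 1) / D)
    (s X₁ : ℂ) (hs : s ^ 2 = p ^ 2 / 4 - q)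
    (hX₁ : X₁ = -p / 2 + s ∨ X₁ = -p / 2 - s)
    (hden₁ : X₁ * M₁.det + V₁ * M₁ 1 1 ≠ 0)
    (hden₂ : X₁ * M₂.det + V₁ * M₂ 1 1 ≠ 0)
    (X₂ : ℂ) (hX₂ : X₂ = -V₂ * (V₁ + M₁ 0 0 * X₁) / (X₁ * M₁.det + V₁ * M₁ 1 1)) :
    (X₁ * X₂ * M₁.det + X₁ * V₂ * M₁ 0 0 + X₂ * V₁ * M₁ 1 1 + V₁ * V₂ = 0) ∧
    (X₁ * X₂ * M₂.det + X₁ * V₂ * M₂ 0 0 + X₂ * V₁ * M₂ 1 1 + V₁ * V₂ = 0) :=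
  double_defect_design_general V₁ V₂ M₁ M₂ D hD hD0 p q hp hq s X₁ hs hX₁ hden₁ X₂ hX₂
end
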